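/- Let d and R be positive integers with d ≤ R, and let ε, c, β be reals with 0 < ε < 1, 0 < c < ε/2, and εR ≤ β ≤ R. Then Σ_{i=1}^{⌊cd⌋} S_2(d,i) · β^(i-d+1) ≤ (d²β/2) · (1/2 + c/ε)^d. -/

import Mathlib

/-- `S2 d i` is the number of partitions of a `d`-element set into exactly `i`
blocks, each of size at least `2`. -/
def S2 (d i : ℕ) : ℕ :=
  (Finset.univ.filter fun P : Finset (Finset (Fin d)) =>
    P.card = i ∧ (∀ p ∈ P, 2 ≤ p.card) ∧
      ∀ v : Fin d, (P.filter fun p => v ∈ p).card = 1).card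

/-!
Splitting off the block that contains a fixed element bounds the number of partitions of an
`n`-set into `i` blocks of size at least two recursively, and summing the recursion gives the
exponential generating function bound `S₂(d, i) · i! · y^d ≤ d! · (y e^y / 2)^i`, `y ≥ 0`.
At `y = (d - i) / i`, bounding `d! / i!` by the monotonicity of the Stirling sequence and then
applying weighted AM–GM gives `S₂(d, i) ≤ d (1/2 + i/x)^d x^(d-i)` for every `x > 0`. With
`x = εd ≤ β`, every term of the sum is at most `d (1/2 + c/ε)^d β`, and there are at most
`cd ≤ d/2` terms.
-/

open Finset Real
open scoped Nat

lemma sum_choose_mul_factorial_mul_pow_le {y : ℝ} (hy : 0 ≤ y) (N : ℕ) :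
    ∑ m ∈ range (N + 1), (N.choose m : ℝ) * (N - m)! * y ^ m ≤ N ! * exp y := by
  have hterm : ∀ m ∈ range (N + 1),
      (N.choose m : ℝ) * (N - m)! * y ^ m = N ! * (y ^ m / m !) := by
    intro m hm
    have h := Nat.choose_mul_factorial_mul_factorial (Nat.lt_succ_iff.mp (mem_range.mp hm))
    rw [← h]
    push_cast
    field_simp
  rw [sum_congr rfl hterm, ← mul_sum]
  gcongr
  exact sum_le_exp_of_nonneg hy _

lemma factorial_mul_exp_mul_pow_le {i d : ℕ} (hi : 0 < i) (hid : i ≤ d) :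
    (d ! : ℝ) * exp d * i ^ i ≤ d ^ (d + 1) * i ! * exp i := by
  have hstirling : Stirling.stirlingSeq d ≤ Stirling.stirlingSeq i := by
    obtain ⟨i', rfl⟩ := Nat.exists_eq_succ_of_ne_zero hi.ne'
    obtain ⟨d', rfl⟩ := Nat.exists_eq_succ_of_ne_zero (hi.trans_le hid).ne'
    exact Stirling.stirlingSeq'_antitone (Nat.succ_le_succ_iff.mp hid)
  have hi' : (1 : ℝ) ≤ i := by exact_mod_cast hi
  have hd' : (i : ℝ) ≤ d := by exact_mod_cast hid
  rw [Stirling.stirlingSeq, Stirling.stirlingSeq, div_le_div_iff₀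
    (mul_pos (sqrt_pos.mpr (by linarith)) (pow_pos (div_pos (by linarith) (exp_pos 1)) _))
    (by positivity), div_pow, div_pow, ← exp_nat_mul, ← exp_nat_mul, mul_one, mul_one]
    at hstirling
  have hsqrt : √(2 * d) ≤ d * √(2 * i) :=
    calc √(2 * d) ≤ √(d ^ 2 * (2 * i)) := sqrt_le_sqrt (by nlinarith)
      _ = d * √(2 * i) := by rw [sqrt_mul (sq_nonneg _), sqrt_sq (by positivity)]
  refine le_of_mul_le_mul_right ?_ (by positivity : 0 < √(2 * i) / exp i)
  calc (d ! : ℝ) * exp d * i ^ i * (√(2 * i) / exp i)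
      = d ! * (√(2 * i) * (i ^ i / exp i)) * exp d := by ring
    _ ≤ i ! * (√(2 * d) * (d ^ d / exp d)) * exp d := by gcongr
    _ = i ! * √(2 * d) * d ^ d := by field_simp
    _ ≤ i ! * (d * √(2 * i)) * d ^ d := by gcongr
    _ = d ^ (d + 1) * i ! * exp i * (√(2 * i) / exp i) := by
        field_simp
        ring

lemma pow_mul_pow_mul_add_pow_le {a b : ℝ} (ha : 0 ≤ a) (hb : 0 ≤ b) {i k : ℕ} (hi : 0 < i)
    (hk : 0 < k) :
    a ^ i * b ^ k * (i + k : ℝ) ^ (i + k) ≤ i ^ i * k ^ k * (a + b) ^ (i + k) := by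
  set n : ℝ := i + k with hn_def
  have hi' : (0 : ℝ) < i := by exact_mod_cast hi
  have hk' : (0 : ℝ) < k := by exact_mod_cast hk
  have hn0 : 0 < n := by positivity
  have hn : ((i + k : ℕ) : ℝ) = n := by push_cast; rfl
  have hamgm := geom_mean_le_arith_mean2_weighted (w₁ := i / n) (w₂ := k / n)
    (p₁ := n * a / i) (p₂ := n * b / k) (by positivity) (by positivity) (by positivity)
    (by positivity) (by rw [← add_div, div_self hn0.ne'])
  have hmean : i / n * (n * a / i) + k / n * (n * b / k) = a + b := by
    field_simp
  rw [hmean] at hamgm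
  have hpow : ((n * a / i) ^ (i / n) * (n * b / k) ^ (k / n)) ^ (i + k) =
      (n * a / i) ^ i * (n * b / k) ^ k := by
    rw [mul_pow, ← rpow_natCast, ← rpow_natCast, ← rpow_mul (by positivity),
      ← rpow_mul (by positivity), hn, div_mul_cancel₀ _ (by positivity),
      div_mul_cancel₀ _ (by positivity), rpow_natCast, rpow_natCast]
  have hle := pow_le_pow_left₀ (by positivity) hamgm (i + k)
  rw [hpow, div_pow, div_pow, mul_pow, mul_pow, div_mul_div_comm,
    div_le_iff₀ (by positivity)] at hle
  rw [pow_add]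
  linarith

section PartitionsNoSingletons

variable {α : Type*} [DecidableEq α]

def partitionsNoSingletons (V : Finset α) (i : ℕ) : Finset (Finset (Finset α)) :=
  V.powerset.powerset.filter fun P =>
    #P = i ∧ (∀ p ∈ P, 2 ≤ #p) ∧ ∀ v ∈ V, #(P.filter (v ∈ ·)) = 1

variable {V : Finset α} {i : ℕ} {P : Finset (Finset α)}

lemma mem_partitionsNoSingletons :
    P ∈ partitionsNoSingletons V i ↔
      (∀ p ∈ P, p ⊆ V) ∧ #P = i ∧ (∀ p ∈ P, 2 ≤ #p) ∧ ∀ v ∈ V, #(P.filter (v ∈ ·)) = 1 := by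
  simp only [partitionsNoSingletons, mem_filter, mem_powerset, subset_iff (s₁ := P)]

lemma eq_of_mem_partitionsNoSingletons (hP : P ∈ partitionsNoSingletons V i)
    {p q : Finset α} {v : α} (hp : p ∈ P) (hq : q ∈ P) (hvp : v ∈ p) (hvq : v ∈ q) : p = q := by
  obtain ⟨hsub, -, -, hcover⟩ := mem_partitionsNoSingletons.mp hP
  obtain ⟨b, hb⟩ := card_eq_one.mp (hcover v (hsub p hp hvp))
  have hpb : p ∈ P.filter (v ∈ ·) := mem_filter.mpr ⟨hp, hvp⟩
  have hqb : q ∈ P.filter (v ∈ ·) := mem_filter.mpr ⟨hq, hvq⟩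
  rw [hb, mem_singleton] at hpb hqb
  rw [hpb, hqb]

lemma two_mul_le_card_of_mem_partitionsNoSingletons (hP : P ∈ partitionsNoSingletons V i) :
    2 * i ≤ #V := by
  obtain ⟨hsub, rfl, htwo, hcover⟩ := mem_partitionsNoSingletons.mp hP
  calc 2 * #P = ∑ _p ∈ P, 2 := by rw [sum_const, smul_eq_mul, mul_comm]
    _ ≤ ∑ p ∈ P, #(V ∩ p) :=
        sum_le_sum fun p hp => (inter_eq_right.mpr (hsub p hp)).symm ▸ htwo p hp
    _ = #V := by rw [sum_card_inter hcover, mul_one]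

lemma partitionsNoSingletons_eq_empty_of_lt (h : #V < 2 * i) : partitionsNoSingletons V i = ∅ :=
  eq_empty_of_forall_notMem fun _ hP =>
    (two_mul_le_card_of_mem_partitionsNoSingletons hP).not_gt h

lemma card_partitionsNoSingletons_empty_le_one :
    #(partitionsNoSingletons (∅ : Finset α) i) ≤ 1 :=
  card_le_one.mpr fun P hP Q hQ => by
    have key : ∀ R ∈ partitionsNoSingletons (∅ : Finset α) i, R = ∅ := fun R hR => by
      obtain ⟨hsub, -, htwo, -⟩ := mem_partitionsNoSingletons.mp hR
      refine eq_empty_of_forall_notMem fun p hp => ?_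
      have := htwo p hp
      rw [subset_empty.mp (hsub p hp), card_empty] at this
      omega
    rw [key P hP, key Q hQ]

lemma partitionsNoSingletons_zero_eq_empty {a : α} (ha : a ∈ V) :
    partitionsNoSingletons V 0 = ∅ :=
  eq_empty_of_forall_notMem fun P hP => by
    obtain ⟨-, hcard, -, hcover⟩ := mem_partitionsNoSingletons.mp hP
    have := hcover a ha
    rw [card_eq_zero.mp hcard, filter_empty, card_empty] at this
    omega

/-- Removing the block of `a` from a partition of `V` leaves a partition of what remains. -/
lemma card_partitionsNoSingletons_succ_le {a : α} (ha : a ∈ V) :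
    #(partitionsNoSingletons V (i + 1)) ≤
      ∑ C ∈ (V.erase a).powerset, #(partitionsNoSingletons (V.erase a \ C) i) := by
  rw [← card_sigma]
  refine card_le_card_of_injOn
    (fun P => ⟨((P.filter (a ∈ ·)).biUnion id).erase a, P.filter (a ∉ ·)⟩) ?_ ?_
  · intro P hP
    obtain ⟨hsub, hcard, htwo, hcover⟩ := mem_partitionsNoSingletons.mp hP
    obtain ⟨b, hb⟩ := card_eq_one.mp (hcover a ha)
    have hbP : b ∈ P ∧ a ∈ b := mem_filter.mp (hb ▸ mem_singleton_self b)
    simp only [coe_sigma, Set.mem_sigma_iff, mem_coe, mem_powerset, hb, singleton_biUnion, id]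
    refine ⟨erase_subset_erase a (hsub b hbP.1),
      mem_partitionsNoSingletons.mpr ⟨?_, ?_, ?_, ?_⟩⟩
    · intro p hp x hxp
      obtain ⟨hpP, hap⟩ := mem_filter.mp hp
      refine mem_sdiff.mpr
        ⟨mem_erase.mpr ⟨fun h => hap (h ▸ hxp), hsub p hpP hxp⟩, fun hxb => hap ?_⟩
      rw [eq_of_mem_partitionsNoSingletons hP hpP hbP.1 hxp (mem_of_mem_erase hxb)]
      exact hbP.2
    · have := card_filter_add_card_filter_not (s := P) (a ∈ ·)
      rw [hb, card_singleton, hcard] at this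
      omega
    · exact fun p hp => htwo p (mem_filter.mp hp).1
    · intro v hv
      obtain ⟨hva, hvb⟩ := mem_sdiff.mp hv
      rw [filter_filter, ← hcover v (mem_of_mem_erase hva)]
      refine congrArg card
        (filter_congr fun q hq => ⟨And.right, fun hvq => ⟨fun haq => ?_, hvq⟩⟩)
      have : q = b := eq_of_mem_partitionsNoSingletons hP hq hbP.1 haq hbP.2
      exact hvb (mem_erase.mpr ⟨ne_of_mem_erase hva, this ▸ hvq⟩)
  · have hrebuild : ∀ P ∈ partitionsNoSingletons V (i + 1),
        P = insert (insert a (((P.filter (a ∈ ·)).biUnion id).erase a))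
          (P.filter (a ∉ ·)) := by
      intro P hP
      obtain ⟨b, hb⟩ := card_eq_one.mp ((mem_partitionsNoSingletons.mp hP).2.2.2 a ha)
      have hbP : b ∈ P.filter (a ∈ ·) := hb ▸ mem_singleton_self b
      have hab : a ∈ b := (mem_filter.mp hbP).2
      rw [hb, singleton_biUnion, id, insert_erase hab, insert_eq, ← hb,
        filter_union_filter_not_eq]
    intro P₁ hP₁ P₂ hP₂ himage
    simp only [Sigma.mk.inj_iff, heq_eq_eq] at himage
    rw [hrebuild P₁ hP₁, hrebuild P₂ hP₂, himage.1, himage.2]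

lemma card_partitionsNoSingletons_mul_le {y : ℝ} (hy : 0 ≤ y) (V : Finset α) (i : ℕ) :
    #(partitionsNoSingletons V i) * (i ! : ℝ) * y ^ #V ≤ (#V)! * (y * exp y / 2) ^ i := by
  induction V using Finset.strongInduction generalizing i with
  | H V ih =>
  rcases (partitionsNoSingletons V i).eq_empty_or_nonempty with hempty | ⟨P, hP⟩
  · rw [hempty, card_empty, Nat.cast_zero, zero_mul, zero_mul]
    positivity
  have h2i := two_mul_le_card_of_mem_partitionsNoSingletons hP
  rcases V.eq_empty_or_nonempty with rfl | ⟨a, ha⟩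
  · obtain rfl : i = 0 := by simpa using h2i
    simpa using card_partitionsNoSingletons_empty_le_one
  obtain ⟨j, rfl⟩ : ∃ j, i = j + 1 := Nat.exists_eq_succ_of_ne_zero fun hi => by
    subst hi
    rw [partitionsNoSingletons_zero_eq_empty ha] at hP
    exact notMem_empty P hP
  set g := y * exp y / 2
  set N := #(V.erase a)
  have hN : #V = N + 1 := (card_erase_add_one ha).symm
  have hblock : ∀ C ∈ (V.erase a).powerset,
      #(partitionsNoSingletons (V.erase a \ C) j) * ((j + 1)! : ℝ) * y ^ #V ≤
        (j + 1) * y ^ (#C + 1) * ((N - #C)! * g ^ j) := by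
    intro C hC
    have hCV : C ⊆ V.erase a := mem_powerset.mp hC
    have hrest : #(V.erase a \ C) = N - #C := card_sdiff_of_subset hCV
    have hIH := ih (V.erase a \ C) (sdiff_subset.trans_ssubset (erase_ssubset ha)) j
    rw [hrest] at hIH
    have hpow : y ^ #V = y ^ (#C + 1) * y ^ (N - #C) := by
      rw [← pow_add, hN]
      congr 1
      have := card_le_card hCV
      omega
    calc #(partitionsNoSingletons (V.erase a \ C) j) * ((j + 1)! : ℝ) * y ^ #V
        = (j + 1) * y ^ (#C + 1) *
            (#(partitionsNoSingletons (V.erase a \ C) j) * (j ! : ℝ) * y ^ (N - #C)) := by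
          rw [hpow, Nat.factorial_succ]
          push_cast
          ring
      _ ≤ (j + 1) * y ^ (#C + 1) * ((N - #C)! * g ^ j) := by gcongr
  calc #(partitionsNoSingletons V (j + 1)) * ((j + 1)! : ℝ) * y ^ #V
      ≤ ∑ C ∈ (V.erase a).powerset,
          #(partitionsNoSingletons (V.erase a \ C) j) * ((j + 1)! : ℝ) * y ^ #V := by
        rw [← sum_mul, ← sum_mul]
        gcongr
        exact_mod_cast card_partitionsNoSingletons_succ_le ha
    _ ≤ ∑ C ∈ (V.erase a).powerset, (j + 1) * y ^ (#C + 1) * ((N - #C)! * g ^ j) :=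
        sum_le_sum hblock
    _ = (j + 1) * g ^ j * y *
          ∑ m ∈ range (N + 1), (N.choose m : ℝ) * (N - m)! * y ^ m := by
        rw [sum_powerset_apply_card (fun m => (j + 1) * y ^ (m + 1) * ((N - m)! * g ^ j)),
          mul_sum]
        refine sum_congr rfl fun m _ => ?_
        rw [nsmul_eq_mul]
        ring
    _ ≤ (j + 1) * g ^ j * y * (N ! * exp y) := by
        gcongr
        exact sum_choose_mul_factorial_mul_pow_le hy N
    _ = 2 * (j + 1) * N ! * g ^ (j + 1) := by ring
    _ ≤ (#V)! * g ^ (j + 1) := by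
        rw [hN, Nat.factorial_succ]
        push_cast
        gcongr
        exact_mod_cast hN ▸ h2i

end PartitionsNoSingletons

lemma S2_eq_card (d i : ℕ) : S2 d i = #(partitionsNoSingletons (univ : Finset (Fin d)) i) := by
  rw [S2, partitionsNoSingletons, powerset_univ, powerset_univ]
  simp only [mem_univ, forall_const]

lemma S2_eq_zero_of_lt {d i : ℕ} (h : d < 2 * i) : S2 d i = 0 := by
  rw [S2_eq_card, partitionsNoSingletons_eq_empty_of_lt (by simpa using h), card_empty]

lemma S2_mul_le {d i : ℕ} (hi : 0 < i) :
    (S2 d i : ℝ) * (2 * i) ^ i * ((d - i : ℕ) : ℝ) ^ (d - i) ≤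
      d ^ (d + 1) * i ^ (d - i) := by
  rcases lt_or_ge d (2 * i) with hlt | hle
  · rw [S2_eq_zero_of_lt hlt, Nat.cast_zero, zero_mul, zero_mul]
    positivity
  set k := d - i
  have hdk : d = i + k := by omega
  have hi' : (0 : ℝ) < i := by exact_mod_cast hi
  set y : ℝ := k / i with hy_def
  have hk : (k : ℝ) = i * y := by rw [hy_def]; field_simp
  have hy : 0 < y := div_pos (by exact_mod_cast (by omega : 0 < k)) hi'
  have hegf : (S2 d i : ℝ) * i ! * y ^ d ≤ d ! * (y * exp y / 2) ^ i := by
    simpa [S2_eq_card] using card_partitionsNoSingletons_mul_le hy.le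
      (univ : Finset (Fin d)) i
  have hfact := factorial_mul_exp_mul_pow_le hi (by omega : i ≤ d)
  have hexp : exp y ^ i * exp i = exp d := by
    rw [← exp_nat_mul, ← exp_add, ← hk, hdk]
    push_cast
    ring_nf
  refine le_of_mul_le_mul_right ?_ (by positivity : (0 : ℝ) < i ! * y ^ i * exp i)
  calc (S2 d i : ℝ) * (2 * i) ^ i * k ^ k * (i ! * y ^ i * exp i)
      = (S2 d i * i ! * y ^ d) * (2 ^ i * i ^ i * i ^ k * exp i) := by
        rw [hdk, hk]
        ring
    _ ≤ (d ! * (y * exp y / 2) ^ i) * (2 ^ i * i ^ i * i ^ k * exp i) := by gcongr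
    _ = (d ! * exp d * i ^ i) * (y ^ i * i ^ k) := by
        rw [← hexp, div_pow, mul_pow]
        field_simp
    _ ≤ (d ^ (d + 1) * i ! * exp i) * (y ^ i * i ^ k) := by gcongr
    _ = d ^ (d + 1) * i ^ k * (i ! * y ^ i * exp i) := by ring

lemma S2_le {d i : ℕ} (hi : 0 < i) {x : ℝ} (hx : 0 < x) :
    (S2 d i : ℝ) ≤ d * (1 / 2 + i / x) ^ d * x ^ (d - i) := by
  rcases lt_or_ge d (2 * i) with hlt | hle
  · rw [S2_eq_zero_of_lt hlt, Nat.cast_zero]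
    positivity
  obtain ⟨k, rfl⟩ : ∃ k, d = i + k := ⟨d - i, by omega⟩
  have hk : 0 < k := by omega
  have hS2 := S2_mul_le (d := i + k) hi
  have hamgm := pow_mul_pow_mul_add_pow_le (a := 1 / 2) (b := i / x) (by norm_num)
    (by positivity) hi hk
  rw [Nat.add_sub_cancel_left] at hS2 ⊢
  push_cast at hS2 ⊢
  refine le_of_mul_le_mul_right ?_ (by positivity : (0 : ℝ) < (2 * i) ^ i * k ^ k)
  calc (S2 (i + k) i : ℝ) * ((2 * i) ^ i * k ^ k)
      ≤ (i + k) ^ (i + k + 1) * i ^ k := by linarith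
    _ = (i + k) * 2 ^ i * x ^ k * ((1 / 2) ^ i * (i / x) ^ k * (i + k) ^ (i + k)) := by
        simp only [div_pow, one_pow]
        field_simp
        ring
    _ ≤ (i + k) * 2 ^ i * x ^ k * (i ^ i * k ^ k * (1 / 2 + i / x) ^ (i + k)) := by gcongr
    _ = (i + k) * (1 / 2 + i / x) ^ (i + k) * x ^ k * ((2 * i) ^ i * k ^ k) := by ring

lemma S2_mul_zpow_le {d i : ℕ} (hi : 0 < i) (hid : i ≤ d) {x β : ℝ} (hx : 0 < x)
    (hxβ : x ≤ β) :
    (S2 d i : ℝ) * β ^ ((i : ℤ) - d + 1) ≤ d * (1 / 2 + i / x) ^ d * β := by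
  have hβ : 0 < β := hx.trans_le hxβ
  have hzpow : β ^ ((i : ℤ) - d + 1) = β / β ^ (d - i) := by
    rw [show (i : ℤ) - d + 1 = 1 - (d - i : ℕ) by omega, zpow_sub₀ hβ.ne', zpow_one,
      zpow_natCast]
  calc (S2 d i : ℝ) * β ^ ((i : ℤ) - d + 1)
      ≤ d * (1 / 2 + i / x) ^ d * x ^ (d - i) * (β / x ^ (d - i)) := by
        rw [hzpow]
        gcongr
        exact S2_le hi hx
    _ = d * (1 / 2 + i / x) ^ d * β := by field_simp

theorem stmt_15_general (d R : ℕ) (hdR : d ≤ R)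
    (ε c β : ℝ) (hε0 : 0 < ε) (hε1 : ε < 1) (hc0 : 0 < c) (hc : c < ε / 2)
    (hβl : ε * R ≤ β) :
    ∑ i ∈ Finset.Icc 1 ⌊c * d⌋₊, (S2 d i : ℝ) * β ^ ((i : ℤ) - d + 1) ≤
      (d : ℝ) ^ 2 * β / 2 * (1 / 2 + c / ε) ^ d := by
  have hεdβ : ε * d ≤ β := le_trans (by gcongr) hβl
  have hβ : 0 ≤ β := le_trans (by positivity) hεdβ
  have hfloor : (⌊c * d⌋₊ : ℝ) ≤ d / 2 :=
    (Nat.floor_le (by positivity)).trans (by nlinarith [(d.cast_nonneg : (0 : ℝ) ≤ d)])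
  have hterm : ∀ i ∈ Finset.Icc 1 ⌊c * d⌋₊,
      (S2 d i : ℝ) * β ^ ((i : ℤ) - d + 1) ≤ d * (1 / 2 + c / ε) ^ d * β := by
    intro i hi
    obtain ⟨hi1, hic⟩ := Finset.mem_Icc.mp hi
    have hicd : (i : ℝ) ≤ c * d := (Nat.cast_le.mpr hic).trans (Nat.floor_le (by positivity))
    have hi' : (1 : ℝ) ≤ i := by exact_mod_cast hi1
    have hd : (0 : ℝ) < d := by nlinarith
    have hid : i ≤ d := by exact_mod_cast (show (i : ℝ) ≤ d by nlinarith)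
    refine (S2_mul_zpow_le hi1 hid (by positivity) hεdβ).trans ?_
    have : (i : ℝ) / (ε * d) ≤ c / ε := by
      rw [div_le_div_iff₀ (by positivity) hε0]
      nlinarith
    gcongr
  calc ∑ i ∈ Finset.Icc 1 ⌊c * d⌋₊, (S2 d i : ℝ) * β ^ ((i : ℤ) - d + 1)
      ≤ ∑ _i ∈ Finset.Icc 1 ⌊c * d⌋₊, d * (1 / 2 + c / ε) ^ d * β := sum_le_sum hterm
    _ = ⌊c * d⌋₊ * (d * (1 / 2 + c / ε) ^ d * β) := by simp
    _ ≤ d / 2 * (d * (1 / 2 + c / ε) ^ d * β) := by gcongr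
    _ = (d : ℝ) ^ 2 * β / 2 * (1 / 2 + c / ε) ^ d := by ring

theorem stmt_15 (d R : ℕ) (hd : 0 < d) (hR : 0 < R) (hdR : d ≤ R)
    (ε c β : ℝ) (hε0 : 0 < ε) (hε1 : ε < 1) (hc0 : 0 < c) (hc : c < ε / 2)
    (hβl : ε * R ≤ β) (hβu : β ≤ R) :
    ∑ i ∈ Finset.Icc 1 ⌊c * d⌋₊, (S2 d i : ℝ) * β ^ ((i : ℤ) - d + 1) ≤
      (d : ℝ) ^ 2 * β / 2 * (1 / 2 + c / ε) ^ d :=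
  stmt_15_general d R hdR ε c β hε0 hε1 hc0 hc hβl
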